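/- arXiv:2002.06094 — 4 statements merged into one kernel-verified Lean document; each statement's English description precedes it below -/
import Mathlib

section
/- Let x(t) solve ẋ₁ = x₁, ẋ₂ = -x₂ + x₁x₃², ẋ₃ = -x₃ on an interval where x₁(t)x₃(t)² > 0, and fix M > 0. Define y₁ = x₁, y₂ = x₂ - x₁x₃² ln(M/(x₁x₃²)), y₃ = x₃. Then ẏ₁ = y₁, ẏ₂ = -y₂, ẏ₃ = -y₃ on that interval. -/
/-!
The product `u = x₁x₃²` satisfies `u̇ = -u`, hence
`d/dt (u log (M/u)) = u̇ (log (M/u) - 1) = -u log (M/u) + u`,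
and the term `u` exactly cancels the forcing term of `ẋ₂`.
-/

lemma HasDerivAt.mul_sq_of_growth_rates {f g : ℝ → ℝ} {t a b : ℝ}
    (hf : HasDerivAt f (a * f t) t) (hg : HasDerivAt g (b * g t) t) :
    HasDerivAt (fun s => f s * g s ^ 2) ((a + 2 * b) * (f t * g t ^ 2)) t :=
  (hf.fun_mul (hg.fun_pow 2)).congr_deriv (by push_cast; ring)

lemma HasDerivAt.mul_log_div {u : ℝ → ℝ} {t u' M : ℝ} (hu : HasDerivAt u u' t)
    (hut : u t ≠ 0) (hM : M ≠ 0) :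
    HasDerivAt (fun s => u s * Real.log (M / u s)) (u' * (Real.log (M / u t) - 1)) t := by
  have hlog := ((hasDerivAt_const t M).fun_div hu hut).log (div_ne_zero hM hut)
  refine (hu.fun_mul hlog).congr_deriv ?_
  field_simp
  ring

theorem stmt11_general (I : Set ℝ)
    (M : ℝ) (hM : 0 < M) (x1 x2 x3 y1 y2 y3 : ℝ → ℝ)
    (h1 : ∀ t ∈ I, HasDerivAt x1 (x1 t) t)
    (h2 : ∀ t ∈ I, HasDerivAt x2 (-(x2 t) + x1 t * (x3 t) ^ 2) t)
    (h3 : ∀ t ∈ I, HasDerivAt x3 (-(x3 t)) t)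
    (hpos : ∀ t ∈ I, 0 < x1 t * (x3 t) ^ 2)
    (hy1 : ∀ t, y1 t = x1 t)
    (hy2 : ∀ t, y2 t = x2 t - x1 t * (x3 t) ^ 2 * Real.log (M / (x1 t * (x3 t) ^ 2)))
    (hy3 : ∀ t, y3 t = x3 t) :
    ∀ t ∈ I, HasDerivAt y1 (y1 t) t ∧ HasDerivAt y2 (-(y2 t)) t ∧
      HasDerivAt y3 (-(y3 t)) t := by
  intro t ht
  obtain rfl : y1 = x1 := funext hy1
  obtain rfl : y3 = x3 := funext hy3
  obtain rfl : y2 = _ := funext hy2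
  have hu := ((h1 t ht).congr_deriv (one_mul _).symm).mul_sq_of_growth_rates
    ((h3 t ht).congr_deriv (neg_one_mul _).symm)
  refine ⟨h1 t ht, ?_, h3 t ht⟩
  exact ((h2 t ht).fun_sub (hu.mul_log_div (hpos t ht).ne' hM.ne')).congr_deriv (by ring)

/-- Along a solution of `ẋ₁ = x₁, ẋ₂ = -x₂ + x₁x₃², ẋ₃ = -x₃` on an open interval where
`x₁x₃² > 0`, with `M > 0`, the variables `y₁ = x₁`, `y₂ = x₂ - x₁x₃² ln(M/(x₁x₃²))`,
`y₃ = x₃` satisfy `ẏ₁ = y₁, ẏ₂ = -y₂, ẏ₃ = -y₃`. -/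
theorem stmt11 (I : Set ℝ) (hI : IsOpen I) (hI' : I.OrdConnected)
    (M : ℝ) (hM : 0 < M) (x1 x2 x3 y1 y2 y3 : ℝ → ℝ)
    (h1 : ∀ t ∈ I, HasDerivAt x1 (x1 t) t)
    (h2 : ∀ t ∈ I, HasDerivAt x2 (-(x2 t) + x1 t * (x3 t) ^ 2) t)
    (h3 : ∀ t ∈ I, HasDerivAt x3 (-(x3 t)) t)
    (hpos : ∀ t ∈ I, 0 < x1 t * (x3 t) ^ 2)
    (hy1 : ∀ t, y1 t = x1 t)
    (hy2 : ∀ t, y2 t = x2 t - x1 t * (x3 t) ^ 2 * Real.log (M / (x1 t * (x3 t) ^ 2)))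
    (hy3 : ∀ t, y3 t = x3 t) :
    ∀ t ∈ I, HasDerivAt y1 (y1 t) t ∧ HasDerivAt y2 (-(y2 t)) t ∧
      HasDerivAt y3 (-(y3 t)) t :=
  stmt11_general I M hM x1 x2 x3 y1 y2 y3 h1 h2 h3 hpos hy1 hy2 hy3
end

section
/- Let A be an n×n real matrix and Ŵ : ℝⁿ → ℝⁿ continuous and bounded, with all eigenvalues of A having negative real part. Let φ be the flow of ẋ = f(x) and suppose x(t) = φ_t(x₀). Define z(t) = -∫_{-∞}^0 e^{-As} Ŵ(φ_s(x(t))) ds. Then z is differentiable and ż(t) = A z(t) - Ŵ(x(t)). -/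
open MeasureTheory Matrix

attribute [local instance] Matrix.linftyOpNormedRing Matrix.linftyOpNormedAlgebra

/-!
If every eigenvalue `μ` of `A` has `Re μ < 0`, then `exp A` has spectral radius `< 1`: in finite
dimension `exp A` is a polynomial in `A`, so its eigenvalues are the `exp μ`. Gelfand's formula then
gives `‖exp (u • A)‖ ≤ K e^{-c u}` for `u ≥ 0`, which makes the integral defining `z` converge.
By the flow property and the substitution `u = t + s`,
`z t = -exp (t • A) *ᵥ ∫_{u ≤ t} exp (-(u • A)) *ᵥ Ŵ (x u)`, and the product rule together with
the fundamental theorem of calculus gives `ż = A z - Ŵ (x t)`.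
-/

open NormedSpace Polynomial Filter Set
open scoped NNReal

section ComplexBanachAlgebra

variable {𝔸 : Type*} [NormedRing 𝔸] [NormedAlgebra ℂ 𝔸] [CompleteSpace 𝔸]

theorem exists_norm_pow_le_mul_pow_of_spectralRadius_lt (a : 𝔸) {ρ : ℝ≥0}
    (h : spectralRadius ℂ a < ρ) : ∃ C : ℝ, ∀ k : ℕ, ‖a ^ k‖ ≤ C * (ρ : ℝ) ^ k := by
  have hρ : 0 < ρ := ENNReal.coe_pos.1 (zero_le.trans_lt h)
  have hev : ∀ᶠ k : ℕ in atTop, ‖a ^ k‖ / (ρ : ℝ) ^ k ≤ 1 := by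
    filter_upwards [(spectrum.pow_nnnorm_pow_one_div_tendsto_nhds_spectralRadius a).eventually_lt_const
      h, eventually_ne_atTop 0] with k hk hk0
    rw [one_div, ENNReal.rpow_inv_lt_iff (by positivity), ENNReal.rpow_natCast] at hk
    rw [div_le_one (by positivity), ← coe_nnnorm, ← NNReal.coe_pow]
    exact_mod_cast hk.le
  obtain ⟨C, hC⟩ := (isBoundedUnder_of_eventually_le hev).bddAbove_range
  exact ⟨C, fun k => (div_le_iff₀ (by positivity)).1 (hC ⟨k, rfl⟩)⟩

theorem exists_norm_exp_smul_le_of_spectralRadius_exp_lt_one (b : 𝔸)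
    (h : spectralRadius ℂ (exp b) < 1) :
    ∃ K c : ℝ, 0 < c ∧ ∀ u : ℝ, 0 ≤ u → ‖exp ((u : ℂ) • b)‖ ≤ K * Real.exp (-(c * u)) := by
  -- the algebraic lemmas about `exp` are stated for `ℚ`-algebras
  let +nondep : NormedAlgebra ℚ 𝔸 := .restrictScalars ℚ ℂ 𝔸
  obtain ⟨ρ, hbρ, hρ1⟩ := ENNReal.lt_iff_exists_nnreal_btwn.1 h
  have hρ : 0 < (ρ : ℝ) := ENNReal.coe_pos.1 (zero_le.trans_lt hbρ)
  have hρ1 : (ρ : ℝ) < 1 := by exact_mod_cast hρ1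
  obtain ⟨C, hC⟩ := exists_norm_pow_le_mul_pow_of_spectralRadius_lt (exp b) hbρ
  obtain ⟨M, hM⟩ := (isCompact_Icc (a := (0 : ℝ)) (b := 1)).exists_bound_of_continuousOn
    (by fun_prop : Continuous fun u : ℝ => exp ((u : ℂ) • b)).continuousOn
  have hM0 : 0 ≤ M := (norm_nonneg _).trans (hM 0 (by simp))
  have hC0 : 0 ≤ C := by simpa using (norm_nonneg _).trans (hC 0)
  refine ⟨M * C / ρ, -Real.log ρ, neg_pos.2 (Real.log_neg hρ hρ1), fun u hu => ?_⟩
  set k := ⌊u⌋₊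
  have hsplit : exp ((u : ℂ) • b) = exp (((u - k : ℝ) : ℂ) • b) * exp b ^ k := by
    rw [← NormedSpace.exp_nsmul,
      ← NormedSpace.exp_add_of_commute (((Commute.refl b).smul_left _).smul_right _)]
    congr 1
    rw [← Nat.cast_smul_eq_nsmul ℂ, ← add_smul]
    push_cast; ring_nf
  have hfrac : ‖exp (((u - k : ℝ) : ℂ) • b)‖ ≤ M :=
    hM _ ⟨sub_nonneg.2 (Nat.floor_le hu), by linarith [Nat.lt_floor_add_one u]⟩
  have hpow : (ρ : ℝ) ^ k ≤ (ρ : ℝ) ^ (u - 1) := by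
    rw [← Real.rpow_natCast]
    exact Real.rpow_le_rpow_of_exponent_ge hρ hρ1.le (by linarith [Nat.lt_floor_add_one u])
  calc ‖exp ((u : ℂ) • b)‖ ≤ M * (C * (ρ : ℝ) ^ k) := by
        rw [hsplit]
        exact (norm_mul_le _ _).trans (mul_le_mul hfrac (hC k) (norm_nonneg _) hM0)
    _ ≤ M * (C * (ρ : ℝ) ^ (u - 1)) := by gcongr
    _ = M * C / ρ * Real.exp (-(-Real.log ρ * u)) := by
        rw [Real.rpow_sub_one hρ.ne', Real.rpow_def_of_pos hρ]; ring_nf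

end ComplexBanachAlgebra

theorem exists_aeval_eq_exp {𝕂 𝔸 : Type*} [RCLike 𝕂] [NormedRing 𝔸] [NormedAlgebra 𝕂 𝔸]
    [FiniteDimensional 𝕂 𝔸] (a : 𝔸) : ∃ q : 𝕂[X], aeval a q = exp a := by
  have := FiniteDimensional.complete 𝕂 𝔸
  have hmem : exp a ∈ Algebra.adjoin 𝕂 {a} := by
    refine (Submodule.closed_of_finiteDimensional (Subalgebra.toSubmodule
      (Algebra.adjoin 𝕂 {a}))).mem_of_tendsto (exp_series_hasSum_exp' (𝕂 := 𝕂) a)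
      (Eventually.of_forall fun s => ?_)
    exact Subalgebra.sum_mem _ fun k _ => Subalgebra.smul_mem _
      (Subalgebra.pow_mem _ (Algebra.self_mem_adjoin_singleton 𝕂 a) k) _
  simpa [Algebra.adjoin_singleton_eq_range_aeval] using hmem


section ImproperIntegral

variable {E : Type*} [NormedAddCommGroup E]

theorem Continuous.integrableOn_Iic_of_integrableOn_Iic {g : ℝ → E} (hg : Continuous g) {a : ℝ}
    (h : IntegrableOn g (Iic a)) (b : ℝ) : IntegrableOn g (Iic b) :=
  (h.union hg.integrableOn_Icc).mono_set Iic_subset_Iic_union_Icc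

theorem hasDerivAt_integral_Iic [NormedSpace ℝ E] [CompleteSpace E] {g : ℝ → E}
    (hg : Continuous g) {a : ℝ} (h : IntegrableOn g (Iic a)) (t : ℝ) :
    HasDerivAt (fun t => ∫ u in Iic t, g u) (g t) t := by
  have hsplit : (fun t => ∫ u in Iic t, g u) = fun t => (∫ u in Iic a, g u) + ∫ u in a..t, g u := by
    funext b
    rw [← intervalIntegral.integral_Iic_sub_Iic h (hg.integrableOn_Iic_of_integrableOn_Iic h b)]
    abel
  rw [hsplit]
  exact (hg.integral_hasStrictDerivAt a t).hasDerivAt.const_add _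

theorem integral_Iic_comp_const_add [NormedSpace ℝ E] (f : ℝ → E) (t a : ℝ) :
    ∫ s in Iic a, f (t + s) = ∫ u in Iic (t + a), f u := by
  have := (measurePreserving_add_left volume t).setIntegral_preimage_emb
    (measurableEmbedding_addLeft t) f (Iic (t + a))
  rwa [preimage_const_add_Iic, add_sub_cancel_left] at this

end ImproperIntegral

namespace Matrix

variable {m : Type*} [Fintype m] [DecidableEq m]

theorem pow_mulVec_of_mulVec_eq_smul {R : Type*} [CommSemiring R] {B : Matrix m m R}
    {v : m → R} {μ : R} (h : B *ᵥ v = μ • v) (k : ℕ) : (B ^ k) *ᵥ v = μ ^ k • v := by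
  induction k with
  | zero => simp
  | succ k ih => rw [pow_succ, ← mulVec_mulVec, h, mulVec_smul, ih, smul_smul, ← pow_succ']

theorem exp_mulVec_of_mulVec_eq_smul {𝕂 : Type*} [RCLike 𝕂] {B : Matrix m m 𝕂} {v : m → 𝕂}
    {μ : 𝕂} (h : B *ᵥ v = μ • v) : exp B *ᵥ v = exp μ • v := by
  have hB := (exp_series_hasSum_exp' (𝕂 := 𝕂) B).map (mulVec.addMonoidHomLeft v)
    (continuous_id.matrix_mulVec continuous_const)
  refine hB.unique (((exp_series_hasSum_exp' (𝕂 := 𝕂) μ).smul_const v).congr_fun fun k => ?_)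
  simp [mulVec.addMonoidHomLeft, smul_mulVec, pow_mulVec_of_mulVec_eq_smul h, smul_smul]

theorem spectrum_exp_subset (B : Matrix m m ℂ) :
    spectrum ℂ (exp B) ⊆ Complex.exp '' spectrum ℂ B := by
  nontriviality Matrix m m ℂ
  obtain ⟨q, hq⟩ : ∃ q : ℂ[X], exp B = aeval B q :=
    (exists_aeval_eq_exp (𝕂 := ℂ) B).imp fun _ => Eq.symm
  rw [hq, spectrum.map_polynomial_aeval]
  rintro _ ⟨μ, hμ, rfl⟩
  refine ⟨μ, hμ, ?_⟩
  rw [← spectrum_toLin', ← Module.End.hasEigenvalue_iff_mem_spectrum] at hμ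
  obtain ⟨v, hv⟩ := hμ.exists_hasEigenvector
  have hBv : B *ᵥ v = μ • v := hv.apply_eq_smul
  have hq' : aeval B q *ᵥ v = eval μ q • v := by
    rw [← Module.End.aeval_apply_of_hasEigenvector hv, ← toLin'_apply]
    exact congrArg (· v) (aeval_algHom_apply (toLinAlgEquiv' : Matrix m m ℂ ≃ₐ[ℂ] _) B q).symm
  refine smul_left_injective ℂ hv.2 ?_
  show Complex.exp μ • v = eval μ q • v
  rw [Complex.exp_eq_exp_ℂ, ← exp_mulVec_of_mulVec_eq_smul hBv, hq, hq']

theorem spectralRadius_exp_lt_one {B : Matrix m m ℂ} (hB : ∀ μ ∈ spectrum ℂ B, μ.re < 0) :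
    spectralRadius ℂ (exp B) < 1 := by
  nontriviality Matrix m m ℂ
  refine spectrum.spectralRadius_lt_of_forall_lt (r := 1) _ fun w hw => ?_
  obtain ⟨μ, hμ, rfl⟩ := spectrum_exp_subset B hw
  rw [← NNReal.coe_lt_coe, coe_nnnorm, Complex.norm_exp]
  exact Real.exp_lt_one_iff.2 (hB μ hμ)

theorem norm_map_ofReal (M : Matrix m m ℝ) : ‖M.map Complex.ofReal‖ = ‖M‖ := by
  simp [linfty_opNorm_def]

theorem exp_map_ofReal (M : Matrix m m ℝ) :
    exp (M.map Complex.ofReal) = (exp M).map Complex.ofReal :=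
  (map_exp (Complex.ofRealHom.mapMatrix (m := m))
    (continuous_id.matrix_map Complex.continuous_ofReal) M).symm

theorem exists_norm_exp_smul_le_of_spectrum_re_neg {A : Matrix m m ℝ}
    (hA : ∀ μ ∈ spectrum ℂ (A.map Complex.ofReal), μ.re < 0) :
    ∃ K c : ℝ, 0 < c ∧ ∀ u : ℝ, 0 ≤ u → ‖exp (u • A)‖ ≤ K * Real.exp (-(c * u)) := by
  have hρ : spectralRadius ℂ (exp (A.map Complex.ofReal)) < 1 := spectralRadius_exp_lt_one hA
  obtain ⟨K, c, hc, hK⟩ := exists_norm_exp_smul_le_of_spectralRadius_exp_lt_one _ hρ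
  refine ⟨K, c, hc, fun u hu => ?_⟩
  have hmap : (u • A).map Complex.ofReal = (u : ℂ) • A.map Complex.ofReal := by
    ext; simp
  rw [← norm_map_ofReal, ← exp_map_ofReal, hmap]
  exact hK u hu

theorem continuous_exp_neg_smul_mulVec (A : Matrix m m ℝ) {w : ℝ → m → ℝ} (hw : Continuous w) :
    Continuous fun s : ℝ => exp (-(s • A)) *ᵥ w s :=
  (NormedSpace.exp_continuous.comp (by fun_prop)).matrix_mulVec hw

theorem integrableOn_Iic_exp_neg_smul_mulVec {A : Matrix m m ℝ}
    (hA : ∀ μ ∈ spectrum ℂ (A.map Complex.ofReal), μ.re < 0) {w : ℝ → m → ℝ} {C : ℝ}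
    (hw : Continuous w) (hwC : ∀ s, ‖w s‖ ≤ C) :
    IntegrableOn (fun s : ℝ => exp (-(s • A)) *ᵥ w s) (Iic 0) := by
  obtain ⟨K, c, hc, hK⟩ := exists_norm_exp_smul_le_of_spectrum_re_neg hA
  refine Integrable.mono' ((integrableOn_exp_mul_Iic hc 0).const_mul (K * C))
    (A.continuous_exp_neg_smul_mulVec hw).aestronglyMeasurable ?_
  filter_upwards [ae_restrict_mem measurableSet_Iic] with s hs
  have hs : 0 ≤ -s := neg_nonneg.2 hs
  calc ‖exp (-(s • A)) *ᵥ w s‖ ≤ ‖exp ((-s) • A)‖ * ‖w s‖ := by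
        rw [neg_smul]; exact linfty_opNorm_mulVec _ _
    _ ≤ K * Real.exp (-(c * -s)) * C :=
        mul_le_mul (hK _ hs) (hwC s) (norm_nonneg _) ((norm_nonneg _).trans (hK _ hs))
    _ = K * C * Real.exp (c * s) := by ring_nf

noncomputable def mulVecL : Matrix m m ℝ →L[ℝ] (m → ℝ) →L[ℝ] (m → ℝ) :=
  (mulVecBilin ℝ ℝ).mkContinuous₂ 1 fun M v => by
    rw [one_mul]
    exact linfty_opNorm_mulVec M v

@[simp]
theorem mulVecL_apply (M : Matrix m m ℝ) (v : m → ℝ) : mulVecL M v = M *ᵥ v := rfl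

theorem exp_smul_mul_exp_neg_smul (A : Matrix m m ℝ) (t u : ℝ) :
    exp (t • A) * exp (-(u • A)) = exp (-((u - t) • A)) := by
  rw [← Matrix.exp_add_of_commute _ _ (((Commute.refl A).smul_left t).smul_right u).neg_right,
    sub_smul]
  abel_nf

theorem integral_Iic_exp_neg_smul_mulVec_comp_add (A : Matrix m m ℝ) {w : ℝ → m → ℝ}
    (hw : Continuous w) (hint : IntegrableOn (fun s : ℝ => exp (-(s • A)) *ᵥ w s) (Iic 0)) (t : ℝ) :
    ∫ s in Iic 0, exp (-(s • A)) *ᵥ w (t + s) =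
      exp (t • A) *ᵥ ∫ u in Iic t, exp (-(u • A)) *ᵥ w u := by
  calc ∫ s in Iic 0, exp (-(s • A)) *ᵥ w (t + s)
      = ∫ u in Iic t, exp (-((u - t) • A)) *ᵥ w u := by
        simpa using integral_Iic_comp_const_add (fun u => exp (-((u - t) • A)) *ᵥ w u) t 0
    _ = ∫ u in Iic t, mulVecL (exp (t • A)) (exp (-(u • A)) *ᵥ w u) := by
        congr with u
        rw [mulVecL_apply, mulVec_mulVec, exp_smul_mul_exp_neg_smul]
    _ = exp (t • A) *ᵥ ∫ u in Iic t, exp (-(u • A)) *ᵥ w u :=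
        ContinuousLinearMap.integral_comp_comm _
          ((A.continuous_exp_neg_smul_mulVec hw).integrableOn_Iic_of_integrableOn_Iic hint t)

theorem hasDerivAt_integral_Iic_exp_neg_smul_mulVec_comp_add (A : Matrix m m ℝ)
    {w : ℝ → m → ℝ} (hw : Continuous w)
    (hint : IntegrableOn (fun s : ℝ => exp (-(s • A)) *ᵥ w s) (Iic 0)) (t : ℝ) :
    HasDerivAt (fun t => ∫ s in Iic 0, exp (-(s • A)) *ᵥ w (t + s))
      (A *ᵥ (∫ s in Iic 0, exp (-(s • A)) *ᵥ w (t + s)) + w t) t := by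
  simp_rw [A.integral_Iic_exp_neg_smul_mulVec_comp_add hw hint]
  have hexp : HasDerivAt (fun u : ℝ => mulVecL (exp (u • A))) (mulVecL (A * exp (t • A))) t :=
    mulVecL.hasFDerivAt.comp_hasDerivAt t (hasDerivAt_exp_smul_const' A t)
  refine (hexp.clm_apply
    (hasDerivAt_integral_Iic (A.continuous_exp_neg_smul_mulVec hw) hint t)).congr_deriv ?_
  simp [mulVec_mulVec, exp_smul_mul_exp_neg_smul]

end Matrix

/-- Let `A` be Hurwitz (all eigenvalues with negative real part), `Ŵ` continuous and
bounded, `x` a continuous solution curve of the flow `φ` (so `φ_s(x(t)) = x(t+s)`),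
and `z(t) = -∫_{-∞}^0 e^{-As} Ŵ(φ_s(x(t))) ds`. Then `ż = A z - Ŵ(x(t))`. -/
theorem stmt14 (n : ℕ) (A : Matrix (Fin n) (Fin n) ℝ)
    (hA : ∀ μ ∈ spectrum ℂ (A.map Complex.ofReal), μ.re < 0)
    (W : (Fin n → ℝ) → (Fin n → ℝ)) (hW : Continuous W)
    (C : ℝ) (hWb : ∀ x, ‖W x‖ ≤ C)
    (φ : ℝ → (Fin n → ℝ) → (Fin n → ℝ))
    (x : ℝ → Fin n → ℝ) (hx : Continuous x)
    (hflow : ∀ s t, φ s (x t) = x (t + s))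
    (z : ℝ → Fin n → ℝ)
    (hz : ∀ t, z t = -∫ s in Set.Iic (0:ℝ), (NormedSpace.exp (-(s • A))) *ᵥ W (φ s (x t))) :
    ∀ t, HasDerivAt z (A *ᵥ z t - W (x t)) t := by
  have hint := integrableOn_Iic_exp_neg_smul_mulVec hA (hW.comp hx) fun s => hWb (x s)
  have hz' : z = -fun t => ∫ s in Iic 0, exp (-(s • A)) *ᵥ (W ∘ x) (t + s) :=
    funext fun t => by simp [hz, hflow]
  intro t
  rw [hz']
  refine (A.hasDerivAt_integral_Iic_exp_neg_smul_mulVec_comp_add (hW.comp hx) hint t).neg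
    |>.congr_deriv ?_
  simp [mulVec_neg]
  abel
end

section
/- Define H : (-π, π) → ℝ by H(x) = x + tan(x/2) ∫₀ˣ (φ - sin φ)/(1 - cos φ) dφ for x ≠ 0 and H(0) = 0. Then H is a strictly increasing continuous bijection from (-π, π) onto ℝ. -/
/-!
On `(-2π, 2π) \ {0}` the integrand `(φ - sin φ) / (1 - cos φ)` is the derivative of
`2 - φ cot (φ / 2)`, and this primitive tends to `0` at `0`. The integrand has the sign of `φ`,
so it is integrable near `0` and the fundamental theorem of calculus gives
`∫₀ˣ (φ - sin φ) / (1 - cos φ) dφ = 2 - x cot (x / 2)`. Hence `H x = 2 tan (x / 2)` on `(-π, π)`,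
which `x ↦ x / 2` and `tan` carry strictly monotonically and bijectively onto `ℝ`.
-/

open Real Set MeasureTheory

namespace Real

lemma sin_eq_mul_sinc (x : ℝ) : sin x = x * sinc x := by
  rcases eq_or_ne x 0 with rfl | hx
  · simp
  · rw [sinc_of_ne_zero hx, mul_div_cancel₀ _ hx]

lemma sinc_pos {x : ℝ} (hx : x ∈ Ioo (-π) π) : 0 < sinc x := by
  rcases lt_trichotomy x 0 with hneg | rfl | hpos
  · rw [sinc_of_ne_zero hneg.ne]
    exact div_pos_of_neg_of_neg (sin_neg_of_neg_of_neg_pi_lt hneg hx.1) hneg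
  · simp
  · rw [sinc_of_ne_zero hpos.ne']
    exact div_pos (sin_pos_of_pos_of_lt_pi hpos hx.2) hpos

end Real

lemma sub_sin_div_one_sub_cos_nonneg {φ : ℝ} (hφ : 0 ≤ φ) : 0 ≤ (φ - sin φ) / (1 - cos φ) :=
  div_nonneg (sub_nonneg.2 (sin_le hφ)) (sub_nonneg.2 (cos_le_one φ))

lemma sub_sin_div_one_sub_cos_nonpos {φ : ℝ} (hφ : φ ≤ 0) : (φ - sin φ) / (1 - cos φ) ≤ 0 :=
  div_nonpos_of_nonpos_of_nonneg (sub_nonpos.2 (le_sin hφ)) (sub_nonneg.2 (cos_le_one φ))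

/-- `2 - x cot (x / 2)`, written through `sinc` so that it is visibly continuous at `0`. -/
noncomputable def twoSubMulCotHalf (x : ℝ) : ℝ := 2 - 2 * cos (x / 2) / sinc (x / 2)

lemma continuousOn_twoSubMulCotHalf : ContinuousOn twoSubMulCotHalf (Ioo (-(2 * π)) (2 * π)) := by
  refine continuousOn_const.sub (ContinuousOn.div (by fun_prop) (by fun_prop) fun x hx => ?_)
  exact (sinc_pos ⟨by linarith [hx.1], by linarith [hx.2]⟩).ne'

lemma twoSubMulCotHalf_zero : twoSubMulCotHalf 0 = 0 := by
  norm_num [twoSubMulCotHalf]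

lemma twoSubMulCotHalf_eq {x : ℝ} (hx : sin (x / 2) ≠ 0) :
    twoSubMulCotHalf x = 2 - x * (cos (x / 2) / sin (x / 2)) := by
  have hx0 : x / 2 ≠ 0 := fun h => hx (by rw [h, sin_zero])
  rw [twoSubMulCotHalf, sinc_of_ne_zero hx0]
  field_simp

lemma hasDerivAt_twoSubMulCotHalf {x : ℝ} (hx : sin (x / 2) ≠ 0) :
    HasDerivAt twoSubMulCotHalf ((x - sin x) / (1 - cos x)) x := by
  have hc := ((hasDerivAt_id x).div_const 2).cos
  have hs := ((hasDerivAt_id x).div_const 2).sin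
  have hcot := ((hasDerivAt_id x).mul (hc.div hs hx)).const_sub 2
  have hev : twoSubMulCotHalf =ᶠ[nhds x] fun y => 2 - id y * (cos (y / 2) / sin (y / 2)) := by
    filter_upwards [(continuous_sin.comp (continuous_id.div_const 2)).isOpen_preimage _
      isOpen_compl_singleton |>.mem_nhds hx] with y hy
    exact twoSubMulCotHalf_eq hy
  refine (hcot.congr_of_eventuallyEq hev).congr_deriv ?_
  have hsin : sin x = 2 * sin (x / 2) * cos (x / 2) := by
    rw [← sin_two_mul]; ring_nf
  have hcos : 1 - cos x = 2 * sin (x / 2) ^ 2 := by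
    have : cos x = 2 * cos (x / 2) ^ 2 - 1 := by rw [← cos_two_mul]; ring_nf
    linear_combination -this - 2 * sin_sq_add_cos_sq (x / 2)
  simp only [id, Pi.div_apply]
  rw [hsin, hcos]
  field_simp
  linear_combination x * sin_sq_add_cos_sq (x / 2)

lemma sin_half_ne_zero {x : ℝ} (hx : x ∈ Ioo (-(2 * π)) (2 * π)) (hx0 : x ≠ 0) :
    sin (x / 2) ≠ 0 := by
  rw [sin_eq_mul_sinc]
  exact mul_ne_zero (by positivity) (sinc_pos ⟨by linarith [hx.1], by linarith [hx.2]⟩).ne'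

namespace intervalIntegral

lemma intervalIntegrable_deriv_of_nonpos {f f' : ℝ → ℝ} {a b : ℝ}
    (hcont : ContinuousOn f (uIcc a b))
    (hderiv : ∀ x ∈ Ioo (min a b) (max a b), HasDerivAt f (f' x) x)
    (hneg : ∀ x ∈ Ioo (min a b) (max a b), f' x ≤ 0) : IntervalIntegrable f' volume a b := by
  simpa only [neg_neg] using (intervalIntegrable_deriv_of_nonneg (g' := -f') hcont.neg
    (fun x hx => (hderiv x hx).neg) fun x hx => neg_nonneg.2 (hneg x hx)).neg

end intervalIntegral

lemma integral_sub_sin_div_one_sub_cos {x : ℝ} (hx : x ∈ Ioo (-(2 * π)) (2 * π)) :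
    ∫ φ in (0 : ℝ)..x, (φ - sin φ) / (1 - cos φ) = twoSubMulCotHalf x := by
  have hsub : uIcc 0 x ⊆ Ioo (-(2 * π)) (2 * π) :=
    (ordConnected_Ioo.uIcc_subset ⟨by linarith [pi_pos], by linarith [pi_pos]⟩ hx)
  have hcont := continuousOn_twoSubMulCotHalf.mono hsub
  have hderiv : ∀ φ ∈ Ioo (min 0 x) (max 0 x),
      HasDerivAt twoSubMulCotHalf ((φ - sin φ) / (1 - cos φ)) φ := by
    intro φ hφ
    have hφ0 : φ ≠ 0 := by
      rintro rfl
      simp only [mem_Ioo, inf_lt_left, not_le, left_lt_sup] at hφ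
      linarith [hφ.1, hφ.2]
    exact hasDerivAt_twoSubMulCotHalf (sin_half_ne_zero (hsub (Ioo_subset_Icc_self hφ)) hφ0)
  have hint : IntervalIntegrable (fun φ => (φ - sin φ) / (1 - cos φ)) volume 0 x := by
    rcases le_total 0 x with h | h
    · refine intervalIntegral.intervalIntegrable_deriv_of_nonneg hcont hderiv fun φ hφ => ?_
      exact sub_sin_div_one_sub_cos_nonneg (by simpa [h] using hφ.1.le)
    · refine intervalIntegral.intervalIntegrable_deriv_of_nonpos hcont hderiv fun φ hφ => ?_
      exact sub_sin_div_one_sub_cos_nonpos (by simpa [h] using hφ.2.le)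
  rw [intervalIntegral.integral_eq_sub_of_hasDeriv_right hcont
    (fun φ hφ => (hderiv φ hφ).hasDerivWithinAt) hint, twoSubMulCotHalf_zero, sub_zero]

lemma tan_half_mul_twoSubMulCotHalf {x : ℝ} (hx : x ∈ Ioo (-π) π) :
    tan (x / 2) * twoSubMulCotHalf x = 2 * tan (x / 2) - x := by
  have hc : cos (x / 2) ≠ 0 := (cos_pos_of_mem_Ioo ⟨by linarith [hx.1], by linarith [hx.2]⟩).ne'
  have hs : sinc (x / 2) ≠ 0 :=
    (sinc_pos ⟨by linarith [hx.1, pi_pos], by linarith [hx.2, pi_pos]⟩).ne'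
  rw [twoSubMulCotHalf, tan_eq_sin_div_cos, sin_eq_mul_sinc (x / 2)]
  field_simp

lemma mapsTo_div_two_Ioo : MapsTo (· / 2) (Ioo (-π) π) (Ioo (-(π / 2)) (π / 2)) :=
  fun _ hx => ⟨by linarith [hx.1], by linarith [hx.2]⟩

lemma strictMonoOn_two_mul_tan_half : StrictMonoOn (fun x => 2 * tan (x / 2)) (Ioo (-π) π) :=
  fun _ ha _ hb hab => by
    have := strictMonoOn_tan (mapsTo_div_two_Ioo ha) (mapsTo_div_two_Ioo hb) (by linarith)
    change 2 * tan (_ / 2) < 2 * tan (_ / 2)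
    linarith

lemma continuousOn_two_mul_tan_half : ContinuousOn (fun x => 2 * tan (x / 2)) (Ioo (-π) π) :=
  continuousOn_const.mul (continuousOn_tan_Ioo.comp (by fun_prop) mapsTo_div_two_Ioo)

lemma bijOn_two_mul_tan_half : BijOn (fun x => 2 * tan (x / 2)) (Ioo (-π) π) univ := by
  refine ⟨mapsTo_univ _ _, strictMonoOn_two_mul_tan_half.injOn, fun y _ => ?_⟩
  obtain ⟨hl, hu⟩ := arctan_mem_Ioo (y / 2)
  refine ⟨2 * arctan (y / 2), ⟨by linarith, by linarith⟩, ?_⟩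
  simp only [mul_div_cancel_left₀ _ (two_ne_zero' ℝ), tan_arctan]
  ring

theorem stmt17_general (H : ℝ → ℝ)
    (hHdef : ∀ x, H x = x + Real.tan (x / 2) *
      ∫ φ in (0:ℝ)..x, (φ - Real.sin φ) / (1 - Real.cos φ)) :
    StrictMonoOn H (Set.Ioo (-π) π) ∧ ContinuousOn H (Set.Ioo (-π) π) ∧
      Set.BijOn H (Set.Ioo (-π) π) Set.univ := by
  have hH : EqOn (fun x => 2 * tan (x / 2)) H (Ioo (-π) π) := fun x hx => by
    have hx' : x ∈ Ioo (-(2 * π)) (2 * π) :=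
      ⟨by linarith [hx.1, pi_pos], by linarith [hx.2, pi_pos]⟩
    rw [hHdef, integral_sub_sin_div_one_sub_cos hx', tan_half_mul_twoSubMulCotHalf hx]
    ring
  exact ⟨strictMonoOn_two_mul_tan_half.congr hH, continuousOn_two_mul_tan_half.congr hH.symm,
    bijOn_two_mul_tan_half.congr hH⟩

/-- The map `H(x) = x + tan(x/2) ∫₀ˣ (φ - sin φ)/(1 - cos φ) dφ` is a strictly
increasing continuous bijection from `(-π, π)` onto `ℝ`. -/
theorem stmt17 (H : ℝ → ℝ) (hH0 : H 0 = 0)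
    (hHdef : ∀ x, H x = x + Real.tan (x / 2) *
      ∫ φ in (0:ℝ)..x, (φ - Real.sin φ) / (1 - Real.cos φ)) :
    StrictMonoOn H (Set.Ioo (-π) π) ∧ ContinuousOn H (Set.Ioo (-π) π) ∧
      Set.BijOn H (Set.Ioo (-π) π) Set.univ :=
  stmt17_general H hHdef
end

section
/- Let x(t) be a solution of ẋ = -sin x with x(t) ∈ (0, π) for all t, and define y(t) = x(t) + tan(x(t)/2) ∫₀^{x(t)} (φ - sin φ)/(1 - cos φ) dφ. Then ẏ = -y. -/
/-!
Write `y = F ∘ x` with `F u = u + tan (u/2) g u`, where `g' = (u - sin u)/(1 - cos u)` by the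
fundamental theorem of calculus and `(tan (u/2))' = 1/(1 + cos u)`. Since
`sin u · tan (u/2) = 1 - cos u`, these combine to `sin u · F' u = F u` on `0 < |u| < π`, so
along the flow `ẏ = F'(x) · (-sin x) = -F(x) = -y`. The integrand is `O(φ)` near `0`, hence
integrable.
-/

open Real Set MeasureTheory

noncomputable def sinCosRatio (φ : ℝ) : ℝ := (φ - sin φ) / (1 - cos φ)

noncomputable def linearizingCoordinate (u : ℝ) : ℝ :=
  u + tan (u / 2) * ∫ φ in (0 : ℝ)..u, sinCosRatio φ

lemma cos_lt_one_of_abs_le_pi {u : ℝ} (hu₀ : u ≠ 0) (huπ : |u| ≤ π) : cos u < 1 := by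
  have := cos_le_one_sub_mul_cos_sq huπ
  have : 0 < 2 / π ^ 2 * u ^ 2 := by positivity
  linarith

lemma abs_sinCosRatio_le {φ : ℝ} (hφ : |φ| ≤ π) :
    |sinCosRatio φ| ≤ π ^ 2 / 12 * |φ| := by
  rcases eq_or_ne φ 0 with rfl | hφ₀
  · simp [sinCosRatio]
  have hden : 0 < 1 - cos φ := by linarith [cos_lt_one_of_abs_le_pi hφ₀ hφ]
  rw [sinCosRatio, abs_div, abs_of_pos hden, div_le_iff₀ hden]
  calc |φ - sin φ| ≤ |φ| ^ 3 / 6 := abs_sub_sin_le φ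
    _ = π ^ 2 / 12 * |φ| * (2 / π ^ 2 * φ ^ 2) := by
        rw [← sq_abs φ]; field_simp; ring
    _ ≤ π ^ 2 / 12 * |φ| * (1 - cos φ) := by
        gcongr; linarith [cos_le_one_sub_mul_cos_sq hφ]

lemma measurable_sinCosRatio : Measurable sinCosRatio :=
  (measurable_id.sub measurable_sin).div (measurable_const.sub measurable_cos)

lemma intervalIntegrable_sinCosRatio {u : ℝ} (hu : |u| ≤ π) :
    IntervalIntegrable sinCosRatio volume 0 u := by
  have hbound : Continuous fun φ : ℝ => π ^ 2 / 12 * |φ| := by fun_prop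
  refine (hbound.intervalIntegrable 0 u).mono_fun' measurable_sinCosRatio.aestronglyMeasurable
    ((ae_restrict_iff' measurableSet_uIoc).2 (Filter.Eventually.of_forall fun φ hφ => ?_))
  have : |φ| ≤ |u| := by
    rcases mem_uIoc.1 hφ with ⟨h₁, h₂⟩ | ⟨h₁, h₂⟩ <;>
      exact abs_le.2 ⟨by linarith [neg_abs_le u, abs_nonneg u],
        by linarith [le_abs_self u, abs_nonneg u]⟩
  exact abs_sinCosRatio_le (this.trans hu)

lemma continuousAt_sinCosRatio {u : ℝ} (hu : cos u ≠ 1) : ContinuousAt sinCosRatio u :=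
  ((continuous_id.sub continuous_sin).continuousAt).div
    ((continuous_const.sub continuous_cos).continuousAt) (sub_ne_zero.2 hu.symm)

lemma hasDerivAt_integral_sinCosRatio {u : ℝ} (hu₀ : u ≠ 0) (huπ : |u| ≤ π) :
    HasDerivAt (fun v => ∫ φ in (0 : ℝ)..v, sinCosRatio φ) (sinCosRatio u) u :=
  intervalIntegral.integral_hasDerivAt_right (intervalIntegrable_sinCosRatio huπ)
    measurable_sinCosRatio.stronglyMeasurable.stronglyMeasurableAtFilter
    (continuousAt_sinCosRatio (cos_lt_one_of_abs_le_pi hu₀ huπ).ne)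

lemma one_add_cos_eq_two_mul_cos_half_sq (u : ℝ) : 1 + cos u = 2 * cos (u / 2) ^ 2 := by
  rw [cos_sq, show 2 * (u / 2) = u by ring]; ring

lemma hasDerivAt_tan_half {u : ℝ} (hu : cos (u / 2) ≠ 0) :
    HasDerivAt (fun v => tan (v / 2)) (1 / (1 + cos u)) u := by
  refine ((hasDerivAt_tan hu).comp u ((hasDerivAt_id u).div_const 2)).congr_deriv ?_
  rw [one_add_cos_eq_two_mul_cos_half_sq]; simp

lemma tan_half_eq_sin_div_one_add_cos (u : ℝ) : tan (u / 2) = sin u / (1 + cos u) := by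
  have hsin : sin u = 2 * sin (u / 2) * cos (u / 2) := by
    rw [← sin_two_mul, show 2 * (u / 2) = u by ring]
  rw [tan_eq_sin_div_cos, one_add_cos_eq_two_mul_cos_half_sq, hsin]
  rcases eq_or_ne (cos (u / 2)) 0 with h | h
  · simp [h]
  · field_simp

lemma sin_mul_tan_half {u : ℝ} (hu : 1 + cos u ≠ 0) : sin u * tan (u / 2) = 1 - cos u := by
  rw [tan_half_eq_sin_div_one_add_cos, ← mul_div_assoc, div_eq_iff hu, ← sq, sin_sq]; ring

lemma hasDerivAt_linearizingCoordinate {u : ℝ} (hu₀ : u ≠ 0) (huπ : |u| < π) :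
    HasDerivAt linearizingCoordinate (linearizingCoordinate u / sin u) u := by
  obtain ⟨hu_left, hu_right⟩ := abs_lt.1 huπ
  have hcos : 0 < cos (u / 2) := cos_pos_of_mem_Ioo ⟨by linarith, by linarith⟩
  have hsin : sin u ≠ 0 := fun h => hu₀ <| (sin_eq_zero_iff_of_lt_of_lt hu_left hu_right).1 h
  have h1 : 1 + cos u ≠ 0 := by rw [one_add_cos_eq_two_mul_cos_half_sq]; positivity
  refine ((hasDerivAt_id u).add ((hasDerivAt_tan_half hcos.ne').mul
    (hasDerivAt_integral_sinCosRatio hu₀ huπ.le))).congr_deriv ?_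
  have hden : 1 - cos u ≠ 0 := by linarith [cos_lt_one_of_abs_le_pi hu₀ huπ.le]
  set G := ∫ φ in (0 : ℝ)..u, sinCosRatio φ
  rw [eq_div_iff hsin]
  calc (1 + (1 / (1 + cos u) * G + tan (u / 2) * sinCosRatio u)) * sin u
      = sin u + sin u / (1 + cos u) * G + sin u * tan (u / 2) * sinCosRatio u := by ring
    _ = sin u + tan (u / 2) * G + (1 - cos u) * sinCosRatio u := by
        rw [← tan_half_eq_sin_div_one_add_cos, sin_mul_tan_half h1]
    _ = linearizingCoordinate u := by
        rw [linearizingCoordinate, sinCosRatio, mul_div_cancel₀ _ hden]; ring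

/-- Along a solution `x(t) ∈ (0, π)` of `ẋ = -sin x`, the function
`y(t) = x(t) + tan(x(t)/2) ∫₀^{x(t)} (φ - sin φ)/(1 - cos φ) dφ` satisfies `ẏ = -y`. -/
theorem stmt18 (x y : ℝ → ℝ)
    (hrange : ∀ t, x t ∈ Set.Ioo 0 π)
    (hx : ∀ t, HasDerivAt x (-Real.sin (x t)) t)
    (hy : ∀ t, y t = x t + Real.tan (x t / 2) *
      ∫ φ in (0:ℝ)..(x t), (φ - Real.sin φ) / (1 - Real.cos φ)) :
    ∀ t, HasDerivAt y (-(y t)) t := by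
  intro t
  obtain ⟨hx₀, hxπ⟩ := hrange t
  have hsin : sin (x t) ≠ 0 := (sin_pos_of_pos_of_lt_pi hx₀ hxπ).ne'
  obtain rfl : y = linearizingCoordinate ∘ x := funext hy
  refine ((hasDerivAt_linearizingCoordinate hx₀.ne' (by rwa [abs_of_pos hx₀])).comp t
    (hx t)).congr_deriv ?_
  rw [Function.comp_apply, mul_neg, div_mul_cancel₀ _ hsin]
end
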